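/- arXiv:2504.04856 — 2 statements merged into one kernel-verified Lean document; each statement's English description precedes it below -/
import Mathlib

section
/- Let A and B be nonempty finite types and let Q̂ be the convex cone of Hermitian matrices indexed by A × B generated by the set of states over time { (ρ ⊗ₖ 1) ★ J : ρ a state on A, J a Jamiołkowski matrix from A to B } (i.e. the set of all finite nonnegative linear combinations of such matrices). Then, in the real inner product space of Hermitian matrices indexed by A × B with ⟪X, Y⟫ = Re Tr(X·Y): (i) Q̂ is pointed, i.e. if X ∈ Q̂ and −X ∈ Q̂ then X = 0; (ii) Q̂ is spanning, i.e. every Hermitian matrix indexed by A × B is a difference of two elements of Q̂; (iii) the dual cone Q̂* = { X Hermitian : ∀ Q ∈ Q̂, Re Tr(X·Q) ≥ 0 } is likewise pointed and spanning. -/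
open Matrix
open scoped Kronecker ComplexOrder

noncomputable def jordan {n : Type*} [Fintype n] (X Y : Matrix n n ℂ) : Matrix n n ℂ :=
  (2 : ℂ)⁻¹ • (X * Y + Y * X)

noncomputable def trB {A B : Type*} [Fintype B] (M : Matrix (A × B) (A × B) ℂ) : Matrix A A ℂ :=
  Matrix.of fun i j => ∑ k, M (i, k) (j, k)

noncomputable def trA {A B : Type*} [Fintype A] (M : Matrix (A × B) (A × B) ℂ) : Matrix B B ℂ :=
  Matrix.of fun k l => ∑ i, M (i, k) (i, l)

def ptA {A B : Type*} (M : Matrix (A × B) (A × B) ℂ) : Matrix (A × B) (A × B) ℂ :=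
  Matrix.of fun p q => M (q.1, p.2) (p.1, q.2)

def swap (A : Type*) [DecidableEq A] : Matrix (A × A) (A × A) ℂ :=
  Matrix.of fun p q => if p.1 = q.2 ∧ p.2 = q.1 then 1 else 0

def IsState {A : Type*} [Fintype A] (ρ : Matrix A A ℂ) : Prop :=
  ρ.PosSemidef ∧ ρ.trace = 1

def IsJam {A B : Type*} [Fintype A] [Fintype B] [DecidableEq A]
    (J : Matrix (A × B) (A × B) ℂ) : Prop :=
  (ptA J).PosSemidef ∧ trB J = 1

noncomputable def cost {A B : Type*} [Fintype A] [Fintype B] [DecidableEq A] [DecidableEq B]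
    (K : Matrix (A × B) (A × B) ℂ) (ρ : Matrix A A ℂ) (σ : Matrix B B ℂ) : ℝ :=
  sInf { r : ℝ | ∃ J : Matrix (A × B) (A × B) ℂ, IsJam J ∧
      trA ((ρ ⊗ₖ (1 : Matrix B B ℂ)) * J) = σ ∧
      r = (Matrix.trace (K * jordan (ρ ⊗ₖ (1 : Matrix B B ℂ)) J)).re }

/-!
Every generator `(ρ ⊗ 1) ★ J` has trace `Tr (ρ · Tr_B J) = Tr ρ = 1`, so `Re Tr` is a linear
functional that is strictly positive on the generators; hence `Q̂` is pointed.

For spanning, take the maximally mixed state `ρ₀ = 1/|A|` and the Jamiołkowski matrix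
`J₀ = 1/|B|`: then `(ρ₀ ⊗ 1) ★ J = J/|A|` and `(ρ ⊗ 1) ★ J₀ = (ρ ⊗ 1)/|B|`, so the real span of
`Q̂` contains every Jamiołkowski matrix and every `ρ ⊗ 1`. A Hermitian `H` splits as
`M + Tr_B H ⊗ 1/|B|` with `Tr_B M = 0`; the second summand lies in the span of the `ρ ⊗ 1`, and
`M = c|B| (J₁ - J₀)` for the Jamiołkowski matrix `J₁ = (M + c)/(c|B|)`, `c` large.

The generators have uniformly bounded entries, so `H + C·1` lies in the dual cone for `C` large;
the dual is therefore spanning. It is pointed because `Q̂` spans: a Hermitian `X` orthogonal to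
`Q̂` satisfies `Tr X² = 0`.
-/

namespace PointedCone

variable {E : Type*} [AddCommGroup E] [Module ℝ E] {S : Set E} {x : E}

theorem mem_hull_iff_exists_fin_sum :
    x ∈ hull ℝ S ↔ ∃ (n : ℕ) (c : Fin n → ℝ) (Q : Fin n → E),
      (∀ k, 0 ≤ c k) ∧ (∀ k, Q k ∈ S) ∧ x = ∑ k, c k • Q k := by
  rw [hull, Submodule.mem_span_set']
  constructor
  · rintro ⟨n, c, Q, rfl⟩
    exact ⟨n, fun k => c k, fun k => Q k, fun k => (c k).2, fun k => (Q k).2, rfl⟩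
  · rintro ⟨n, c, Q, hc, hQ, rfl⟩
    exact ⟨n, fun k => ⟨c k, hc k⟩, fun k => ⟨Q k, hQ k⟩, rfl⟩

theorem nonneg_of_mem_hull (f : E →ₗ[ℝ] ℝ) (hS : ∀ y ∈ S, 0 ≤ f y) (hx : x ∈ hull ℝ S) :
    0 ≤ f x := by
  induction hx using Submodule.span_induction with
  | mem y hy => exact hS y hy
  | zero => simp
  | add y z _ _ hy hz => rw [map_add]; positivity
  | smul a y _ hy => exact (f.map_smul (a : ℝ) y).symm ▸ mul_nonneg a.2 hy

theorem eq_zero_of_mem_hull_of_neg_mem (f : E →ₗ[ℝ] ℝ) (hS : ∀ y ∈ S, 0 < f y)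
    (hx : x ∈ hull ℝ S) (hnx : -x ∈ hull ℝ S) : x = 0 := by
  have hS' : ∀ y ∈ S, 0 ≤ f y := fun y hy => (hS y hy).le
  suffices key : ∀ y ∈ hull ℝ S, f y = 0 → y = 0 from
    key x hx <| le_antisymm (by simpa using nonneg_of_mem_hull f hS' hnx)
      (nonneg_of_mem_hull f hS' hx)
  intro y hy
  induction hy using Submodule.span_induction with
  | mem y hy => exact fun h => absurd h (hS y hy).ne'
  | zero => exact fun _ => rfl
  | add y z hy hz ihy ihz =>
    intro h
    have hy0 := nonneg_of_mem_hull f hS' hy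
    have hz0 := nonneg_of_mem_hull f hS' hz
    rw [map_add] at h
    rw [ihy (by linarith), ihz (by linarith), add_zero]
  | smul a y _ ihy =>
    intro h
    change f ((a : ℝ) • y) = 0 at h
    rcases mul_eq_zero.mp ((f.map_smul _ y).symm.trans h) with ha | hy
    · change (a : ℝ) • y = 0
      rw [ha, zero_smul]
    · rw [ihy hy, smul_zero]

theorem exists_sub_of_mem_span (hx : x ∈ Submodule.span ℝ S) :
    ∃ y ∈ hull ℝ S, ∃ z ∈ hull ℝ S, x = y - z := by
  induction hx using Submodule.span_induction with
  | mem y hy => exact ⟨y, subset_hull hy, 0, zero_mem _, (sub_zero y).symm⟩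
  | zero => exact ⟨0, zero_mem _, 0, zero_mem _, (sub_zero 0).symm⟩
  | add _ _ _ _ ih₁ ih₂ =>
    obtain ⟨y₁, hy₁, z₁, hz₁, rfl⟩ := ih₁
    obtain ⟨y₂, hy₂, z₂, hz₂, rfl⟩ := ih₂
    exact ⟨y₁ + y₂, add_mem hy₁ hy₂, z₁ + z₂, add_mem hz₁ hz₂, by abel⟩
  | smul a _ _ ih =>
    obtain ⟨y, hy, z, hz, rfl⟩ := ih
    rcases le_total 0 a with ha | ha
    · exact ⟨a • y, smul_mem _ ha hy, a • z, smul_mem _ ha hz, smul_sub a y z⟩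
    · refine ⟨(-a) • z, smul_mem _ (neg_nonneg.mpr ha) hz,
        (-a) • y, smul_mem _ (neg_nonneg.mpr ha) hy, ?_⟩
      rw [smul_sub, neg_smul, neg_smul, neg_sub_neg]

end PointedCone

theorem mem_span_of_inv_natCast_smul_mem {E : Type*} [AddCommGroup E] [Module ℂ E] {S : Set E}
    {k : ℕ} (hk : k ≠ 0) {x : E} (hx : (k : ℂ)⁻¹ • x ∈ S) : x ∈ Submodule.span ℝ S := by
  have h := Submodule.smul_mem _ (k : ℝ) (Submodule.subset_span (R := ℝ) hx)
  rwa [← Complex.coe_smul, smul_smul, Complex.ofReal_natCast, mul_inv_cancel₀ (by simpa),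
    one_smul] at h

namespace Matrix

variable {n : Type*} [Fintype n]

noncomputable def reTraceMul (X : Matrix n n ℂ) : Matrix n n ℂ →ₗ[ℝ] ℝ :=
  Complex.reLm ∘ₗ (traceLinearMap n ℂ ℂ).restrictScalars ℝ ∘ₗ LinearMap.mulLeft ℝ X

@[simp]
theorem reTraceMul_apply (X Q : Matrix n n ℂ) : reTraceMul X Q = (X * Q).trace.re := rfl

theorem IsHermitian.exists_posSemidef_add_smul_one [DecidableEq n] {N : Matrix n n ℂ}
    (hN : N.IsHermitian) : ∃ c : ℝ, 0 < c ∧ (N + (c : ℂ) • 1).PosSemidef := by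
  open scoped Matrix.Norms.L2Operator MatrixOrder in
  have hle := IsSelfAdjoint.neg_algebraMap_norm_le_self (a := N) hN
  refine ⟨‖N‖ + 1, by positivity, ?_⟩
  rw [Complex.ofReal_add, add_smul, ← add_assoc]
  refine PosSemidef.add ?_ (PosSemidef.one.smul zero_le_one)
  simpa [Matrix.le_iff, Algebra.algebraMap_eq_smul_one, sub_eq_add_neg] using hle

theorem PosSemidef.norm_apply_le_norm_trace {S : Matrix n n ℂ} (hS : S.PosSemidef) (i j : n) :
    ‖S i j‖ ≤ ‖S.trace‖ := by
  have hdiag : ∀ k, 0 ≤ S k k := fun k => hS.diag_nonneg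
  have hle : ∀ k, (S k k).re ≤ S.trace.re := fun k =>
    (Complex.le_def.mp (Finset.single_le_sum (fun k _ => hdiag k) (Finset.mem_univ k))).1
  -- the principal `2 × 2` minor on `{j, i}` gives `‖S i j‖ ^ 2 ≤ S j j * S i i`
  have hminor := (hS.submatrix ![j, i]).det_nonneg
  simp only [det_fin_two, submatrix_apply, Matrix.cons_val_zero, Matrix.cons_val_one] at hminor
  rw [← hS.1.apply j i, Complex.star_def, Complex.conj_mul'] at hminor
  have hre := (Complex.le_def.mp hminor).1
  simp only [Complex.zero_re, Complex.sub_re, Complex.mul_re,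
    ← (Complex.nonneg_iff.mp (hdiag j)).2, zero_mul, sub_zero, ← Complex.ofReal_pow,
    Complex.ofReal_re] at hre
  have htr : ‖S.trace‖ = S.trace.re := by
    simpa using congrArg Complex.re (Complex.norm_of_nonneg' hS.trace_nonneg)
  have hi := (Complex.nonneg_iff.mp (hdiag i)).1
  have hj := (Complex.nonneg_iff.mp (hdiag j)).1
  rw [htr]
  nlinarith [hle i, hle j, norm_nonneg (S i j)]

theorem IsHermitian.eq_zero_of_re_trace_mul_self_eq_zero {X : Matrix n n ℂ} (hX : X.IsHermitian)
    (h : (X * X).trace.re = 0) : X = 0 := by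
  have hnonneg := (posSemidef_conjTranspose_mul_self X).trace_nonneg
  rw [hX.eq] at hnonneg
  rw [← trace_conjTranspose_mul_self_eq_zero_iff, hX.eq]
  exact Complex.ext h (Complex.nonneg_iff.mp hnonneg).2.symm

theorem IsHermitian.eq_zero_of_forall_re_trace_mul_eq_zero {C : Set (Matrix n n ℂ)}
    (hC : ∀ H : Matrix n n ℂ, H.IsHermitian → ∃ Y ∈ C, ∃ Z ∈ C, H = Y - Z)
    {X : Matrix n n ℂ} (hX : X.IsHermitian) (h : ∀ Q ∈ C, (X * Q).trace.re = 0) : X = 0 := by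
  obtain ⟨Y, hY, Z, hZ, hYZ⟩ := hC X hX
  refine hX.eq_zero_of_re_trace_mul_self_eq_zero ?_
  rw [show (X * X).trace.re = (X * Y).trace.re - (X * Z).trace.re by
    rw [← Complex.sub_re, ← trace_sub, ← Matrix.mul_sub, ← hYZ], h Y hY, h Z hZ, sub_zero]

theorem norm_mul_apply_le {X Y : Matrix n n ℂ} {a b : ℝ} (hX : ∀ i j, ‖X i j‖ ≤ a)
    (hY : ∀ i j, ‖Y i j‖ ≤ b) (i j : n) : ‖(X * Y) i j‖ ≤ Fintype.card n * (a * b) :=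
  calc ‖(X * Y) i j‖ ≤ ∑ _k : n, a * b := norm_sum_le_of_le _ fun k _ =>
        (norm_mul _ _).trans_le <|
          mul_le_mul (hX i k) (hY k j) (norm_nonneg _) ((norm_nonneg _).trans (hX i k))
    _ = Fintype.card n * (a * b) := by simp

theorem norm_trace_mul_le {H Q : Matrix n n ℂ} {b : ℝ} (hQ : ∀ i j, ‖Q i j‖ ≤ b) :
    ‖(H * Q).trace‖ ≤ (∑ i, ∑ j, ‖H i j‖) * b := by
  simp only [trace, diag, mul_apply, Finset.sum_mul]
  refine (norm_sum_le _ _).trans (Finset.sum_le_sum fun i _ => ?_)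
  refine (norm_sum_le _ _).trans (Finset.sum_le_sum fun j _ => ?_)
  rw [norm_mul]
  exact mul_le_mul_of_nonneg_left (hQ j i) (norm_nonneg _)

end Matrix

section Jordan

variable {n : Type*} [Fintype n]

theorem jordan_comm (X Y : Matrix n n ℂ) : jordan X Y = jordan Y X := by
  rw [jordan, jordan, add_comm]

theorem jordan_smul_one_left [DecidableEq n] (z : ℂ) (Y : Matrix n n ℂ) :
    jordan (z • 1) Y = z • Y := by
  rw [jordan, smul_mul_assoc, one_mul, mul_smul_comm, mul_one, ← two_smul ℂ, smul_smul,
    smul_smul, inv_mul_cancel₀ two_ne_zero, one_mul]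

theorem trace_jordan (X Y : Matrix n n ℂ) : (jordan X Y).trace = (X * Y).trace := by
  rw [jordan, trace_smul, trace_add, trace_mul_comm Y X, ← two_mul, smul_eq_mul,
    inv_mul_cancel_left₀ two_ne_zero]

theorem norm_jordan_apply_le {X Y : Matrix n n ℂ} {a b : ℝ} (hX : ∀ i j, ‖X i j‖ ≤ a)
    (hY : ∀ i j, ‖Y i j‖ ≤ b) (i j : n) : ‖jordan X Y i j‖ ≤ Fintype.card n * (a * b) := by
  have hXY := norm_mul_apply_le hX hY i j
  have hYX := norm_mul_apply_le hY hX i j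
  have h := norm_add_le ((X * Y) i j) ((Y * X) i j)
  simp only [jordan, Matrix.smul_apply, Matrix.add_apply, smul_eq_mul, norm_mul, norm_inv,
    Complex.norm_ofNat]
  linarith [mul_comm a b]

end Jordan

section PartialOps

variable {A B : Type*}

theorem trB_add [Fintype B] (M N : Matrix (A × B) (A × B) ℂ) : trB (M + N) = trB M + trB N := by
  ext i j; simp [trB, Finset.sum_add_distrib]

theorem trB_sub [Fintype B] (M N : Matrix (A × B) (A × B) ℂ) : trB (M - N) = trB M - trB N := by
  ext i j; simp [trB, Finset.sum_sub_distrib]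

theorem trB_smul [Fintype B] (z : ℂ) (M : Matrix (A × B) (A × B) ℂ) :
    trB (z • M) = z • trB M := by
  ext i j; simp [trB, Finset.mul_sum]

theorem trB_kronecker_one [Fintype B] [DecidableEq B] (G : Matrix A A ℂ) :
    trB (G ⊗ₖ (1 : Matrix B B ℂ)) = (Fintype.card B : ℂ) • G := by
  ext i j; simp [trB, one_apply, mul_comm]

theorem trB_one [Fintype B] [DecidableEq A] [DecidableEq B] :
    trB (1 : Matrix (A × B) (A × B) ℂ) = (Fintype.card B : ℂ) • 1 := by
  rw [← one_kronecker_one, trB_kronecker_one]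

theorem trace_trB [Fintype A] [Fintype B] (M : Matrix (A × B) (A × B) ℂ) :
    (trB M).trace = M.trace := by
  simp [trace, trB, Fintype.sum_prod_type]

theorem Matrix.IsHermitian.trB [Fintype B] {M : Matrix (A × B) (A × B) ℂ} (hM : M.IsHermitian) :
    (_root_.trB M).IsHermitian := by
  ext i j
  simp only [conjTranspose_apply, _root_.trB, of_apply, star_sum]
  exact Finset.sum_congr rfl fun k _ => hM.apply _ _

theorem trace_kronecker_one_mul [Fintype A] [Fintype B] [DecidableEq B] (ρ : Matrix A A ℂ)
    (M : Matrix (A × B) (A × B) ℂ) :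
    ((ρ ⊗ₖ (1 : Matrix B B ℂ)) * M).trace = (ρ * trB M).trace := by
  simp only [trace, diag, mul_apply, kroneckerMap_apply, one_apply, trB, of_apply,
    Fintype.sum_prod_type, mul_ite, mul_one, mul_zero, ite_mul, zero_mul, Finset.sum_ite_eq,
    Finset.mem_univ, if_true, Finset.mul_sum]
  exact Finset.sum_congr rfl fun i _ => Finset.sum_comm

theorem ptA_add (M N : Matrix (A × B) (A × B) ℂ) : ptA (M + N) = ptA M + ptA N := rfl

theorem ptA_smul (z : ℂ) (M : Matrix (A × B) (A × B) ℂ) : ptA (z • M) = z • ptA M := rfl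

theorem ptA_one [DecidableEq A] [DecidableEq B] : ptA (1 : Matrix (A × B) (A × B) ℂ) = 1 := by
  ext ⟨i, k⟩ ⟨j, l⟩
  simp only [ptA, of_apply, one_apply, Prod.mk.injEq]
  grind

theorem trace_ptA [Fintype A] [Fintype B] (M : Matrix (A × B) (A × B) ℂ) :
    (ptA M).trace = M.trace := rfl

theorem Matrix.IsHermitian.ptA {M : Matrix (A × B) (A × B) ℂ} (hM : M.IsHermitian) :
    (_root_.ptA M).IsHermitian := by
  ext p q
  exact hM.apply _ _

end PartialOps

section StatesAndJamiolkowski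

variable {A B : Type*} [Fintype A] [Fintype B]

theorem isState_smul_one [DecidableEq A] [Nonempty A] :
    IsState ((Fintype.card A : ℂ)⁻¹ • (1 : Matrix A A ℂ)) :=
  ⟨PosSemidef.one.smul (by positivity),
    by rw [trace_smul, trace_one, smul_eq_mul, inv_mul_cancel₀ (by simp)]⟩

theorem isJam_smul_one [DecidableEq A] [DecidableEq B] [Nonempty B] :
    IsJam ((Fintype.card B : ℂ)⁻¹ • (1 : Matrix (A × B) (A × B) ℂ)) :=
  ⟨by rw [ptA_smul, ptA_one]; exact PosSemidef.one.smul (by positivity),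
    by rw [trB_smul, trB_one, smul_smul, inv_mul_cancel₀ (by simp), one_smul]⟩

theorem IsState.posSemidef_kronecker_one [DecidableEq B] {ρ : Matrix A A ℂ} (hρ : IsState ρ) :
    (ρ ⊗ₖ (1 : Matrix B B ℂ)).PosSemidef :=
  hρ.1.kronecker PosSemidef.one

theorem IsState.norm_kronecker_one_apply_le [DecidableEq B] {ρ : Matrix A A ℂ} (hρ : IsState ρ)
    (p q : A × B) : ‖(ρ ⊗ₖ (1 : Matrix B B ℂ)) p q‖ ≤ Fintype.card B := by
  simpa [trace_kronecker, hρ.2] using hρ.posSemidef_kronecker_one.norm_apply_le_norm_trace p q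

theorem IsJam.trace [DecidableEq A] {J : Matrix (A × B) (A × B) ℂ} (hJ : IsJam J) :
    J.trace = Fintype.card A := by
  rw [← trace_trB, hJ.2, trace_one]

theorem IsJam.norm_apply_le [DecidableEq A] {J : Matrix (A × B) (A × B) ℂ} (hJ : IsJam J)
    (p q : A × B) : ‖J p q‖ ≤ Fintype.card A := by
  have h := hJ.1.norm_apply_le_norm_trace (q.1, p.2) (p.1, q.2)
  rwa [trace_ptA, hJ.trace, Complex.norm_natCast] at h

end StatesAndJamiolkowski

section StatesOverTime

variable {A B : Type*} [Fintype A] [Fintype B] [DecidableEq A] [DecidableEq B]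

variable (A B) in
def statesOverTime : Set (Matrix (A × B) (A × B) ℂ) :=
  {Q | ∃ (ρ : Matrix A A ℂ) (J : Matrix (A × B) (A × B) ℂ),
    IsState ρ ∧ IsJam J ∧ Q = jordan (ρ ⊗ₖ (1 : Matrix B B ℂ)) J}

theorem trace_of_mem_statesOverTime {Q : Matrix (A × B) (A × B) ℂ}
    (hQ : Q ∈ statesOverTime A B) : Q.trace = 1 := by
  obtain ⟨ρ, J, hρ, hJ, rfl⟩ := hQ
  rw [trace_jordan, trace_kronecker_one_mul, hJ.2, mul_one, hρ.2]

theorem norm_apply_le_of_mem_statesOverTime {Q : Matrix (A × B) (A × B) ℂ}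
    (hQ : Q ∈ statesOverTime A B) (p q : A × B) :
    ‖Q p q‖ ≤ Fintype.card (A × B) * (Fintype.card B * Fintype.card A) := by
  obtain ⟨ρ, J, hρ, hJ, rfl⟩ := hQ
  exact norm_jordan_apply_le hρ.norm_kronecker_one_apply_le hJ.norm_apply_le p q

theorem exists_forall_abs_re_trace_mul_le (H : Matrix (A × B) (A × B) ℂ) :
    ∃ C, 0 ≤ C ∧ ∀ Q ∈ statesOverTime A B, |(H * Q).trace.re| ≤ C :=
  ⟨(∑ i, ∑ j, ‖H i j‖) * (Fintype.card (A × B) * (Fintype.card B * Fintype.card A)),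
    by positivity, fun Q hQ => (Complex.abs_re_le_norm _).trans
      (norm_trace_mul_le (norm_apply_le_of_mem_statesOverTime hQ))⟩

theorem re_trace_add_smul_one_mul_of_mem_statesOverTime (H : Matrix (A × B) (A × B) ℂ) (C : ℝ)
    {Q : Matrix (A × B) (A × B) ℂ} (hQ : Q ∈ statesOverTime A B) :
    ((H + (C : ℂ) • 1) * Q).trace.re = (H * Q).trace.re + C := by
  rw [add_mul, smul_mul_assoc, one_mul, trace_add, trace_smul, trace_of_mem_statesOverTime hQ]
  simp

theorem IsJam.mem_span_statesOverTime [Nonempty A] {J : Matrix (A × B) (A × B) ℂ}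
    (hJ : IsJam J) : J ∈ Submodule.span ℝ (statesOverTime A B) :=
  mem_span_of_inv_natCast_smul_mem (Fintype.card_ne_zero (α := A))
    ⟨_, J, isState_smul_one, hJ, by rw [smul_kronecker, one_kronecker_one, jordan_smul_one_left]⟩

theorem IsState.kronecker_one_mem_span_statesOverTime [Nonempty B] {ρ : Matrix A A ℂ}
    (hρ : IsState ρ) : ρ ⊗ₖ (1 : Matrix B B ℂ) ∈ Submodule.span ℝ (statesOverTime A B) :=
  mem_span_of_inv_natCast_smul_mem (Fintype.card_ne_zero (α := B))
    ⟨ρ, _, hρ, isJam_smul_one, by rw [jordan_comm, jordan_smul_one_left]⟩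

theorem Matrix.PosSemidef.kronecker_one_mem_span_statesOverTime [Nonempty B] {P : Matrix A A ℂ}
    (hP : P.PosSemidef) : P ⊗ₖ (1 : Matrix B B ℂ) ∈ Submodule.span ℝ (statesOverTime A B) := by
  rcases eq_or_ne P 0 with rfl | hP0
  · rw [zero_kronecker]; exact zero_mem _
  set r := P.trace.re
  have htr : P.trace = r := Complex.ext rfl (Complex.nonneg_iff.mp hP.trace_nonneg).2.symm
  have hr : 0 < r := by
    refine lt_of_le_of_ne (Complex.nonneg_iff.mp hP.trace_nonneg).1 fun h => hP0 ?_
    rw [← hP.trace_eq_zero_iff, htr, ← h, Complex.ofReal_zero]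
  have hρ : IsState (r⁻¹ • P) := ⟨hP.smul (inv_nonneg.mpr hr.le), by
    rw [trace_smul, htr, Complex.real_smul, ← Complex.ofReal_mul, inv_mul_cancel₀ hr.ne',
      Complex.ofReal_one]⟩
  have h := Submodule.smul_mem _ r (hρ.kronecker_one_mem_span_statesOverTime (B := B))
  rwa [← smul_kronecker, smul_smul, mul_inv_cancel₀ hr.ne', one_smul] at h

theorem Matrix.IsHermitian.kronecker_one_mem_span_statesOverTime [Nonempty B]
    {G : Matrix A A ℂ} (hG : G.IsHermitian) :
    G ⊗ₖ (1 : Matrix B B ℂ) ∈ Submodule.span ℝ (statesOverTime A B) := by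
  obtain ⟨c, hc, hpsd⟩ := hG.exists_posSemidef_add_smul_one
  have hc1 : ((c : ℂ) • (1 : Matrix A A ℂ)).PosSemidef :=
    PosSemidef.one.smul (Complex.zero_le_real.mpr hc.le)
  rw [eq_sub_of_add_eq (add_kronecker G ((c : ℂ) • 1) (1 : Matrix B B ℂ)).symm]
  exact sub_mem hpsd.kronecker_one_mem_span_statesOverTime
    hc1.kronecker_one_mem_span_statesOverTime

theorem mem_span_statesOverTime_of_trB_eq_zero [Nonempty A] [Nonempty B]
    {M : Matrix (A × B) (A × B) ℂ} (hM : M.IsHermitian) (hM0 : trB M = 0) :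
    M ∈ Submodule.span ℝ (statesOverTime A B) := by
  obtain ⟨c, hc, hpsd⟩ := hM.ptA.exists_posSemidef_add_smul_one
  set k : ℝ := c * Fintype.card B
  have hk : (k : ℂ) ≠ 0 := by simp [k, hc.ne']
  have hJ : IsJam ((k : ℂ)⁻¹ • (M + (c : ℂ) • 1)) := by
    refine ⟨?_, ?_⟩
    · rw [ptA_smul, ptA_add, ptA_smul, ptA_one]
      exact hpsd.smul (by simp [k]; positivity)
    · rw [trB_smul, trB_add, hM0, trB_smul, trB_one, zero_add, smul_smul, smul_smul,
        mul_assoc, ← Complex.ofReal_natCast, ← Complex.ofReal_mul, inv_mul_cancel₀ hk, one_smul]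
  have hsplit : M = k • ((k : ℂ)⁻¹ • (M + (c : ℂ) • 1) - (Fintype.card B : ℂ)⁻¹ • 1) := by
    rw [← Complex.coe_smul, smul_sub, smul_smul, smul_smul, mul_inv_cancel₀ hk, one_smul]
    simp [k]
  rw [hsplit]
  exact Submodule.smul_mem _ _ (sub_mem hJ.mem_span_statesOverTime
    isJam_smul_one.mem_span_statesOverTime)

theorem Matrix.IsHermitian.mem_span_statesOverTime [Nonempty A] [Nonempty B]
    {H : Matrix (A × B) (A × B) ℂ} (hH : H.IsHermitian) :
    H ∈ Submodule.span ℝ (statesOverTime A B) := by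
  set G := _root_.trB H
  have hG : (G ⊗ₖ (1 : Matrix B B ℂ)).IsHermitian := by
    rw [IsHermitian, conjTranspose_kronecker, hH.trB.eq, conjTranspose_one]
  have hsplit : H = (H - (Fintype.card B : ℂ)⁻¹ • (G ⊗ₖ 1)) +
      ((Fintype.card B : ℝ)⁻¹ • (G ⊗ₖ 1)) := by
    rw [← Complex.coe_smul]; push_cast; abel
  rw [hsplit]
  refine add_mem (mem_span_statesOverTime_of_trB_eq_zero ?_ ?_)
    (Submodule.smul_mem _ _ hH.trB.kronecker_one_mem_span_statesOverTime)
  · exact hH.sub (hG.smul (by simp [IsSelfAdjoint]))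
  · rw [trB_sub, trB_smul, trB_kronecker_one, smul_smul, inv_mul_cancel₀ (by simp), one_smul,
      sub_self]

end StatesOverTime

theorem stmt7 {A B : Type*} [Fintype A] [Fintype B] [Nonempty A] [Nonempty B]
    [DecidableEq A] [DecidableEq B]
    (Qhat : Set (Matrix (A × B) (A × B) ℂ))
    (hQhat : Qhat = { X : Matrix (A × B) (A × B) ℂ |
        ∃ (n : ℕ) (c : Fin n → ℝ) (Q : Fin n → Matrix (A × B) (A × B) ℂ),
          (∀ k, 0 ≤ c k) ∧
          (∀ k, ∃ (ρ : Matrix A A ℂ) (J : Matrix (A × B) (A × B) ℂ),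
              IsState ρ ∧ IsJam J ∧ Q k = jordan (ρ ⊗ₖ (1 : Matrix B B ℂ)) J) ∧
          X = ∑ k, c k • Q k })
    (dual : Set (Matrix (A × B) (A × B) ℂ))
    (hdual : dual = { X : Matrix (A × B) (A × B) ℂ |
        X.IsHermitian ∧ ∀ Q ∈ Qhat, 0 ≤ (Matrix.trace (X * Q)).re }) :
    (∀ X ∈ Qhat, -X ∈ Qhat → X = 0) ∧
    (∀ H : Matrix (A × B) (A × B) ℂ, H.IsHermitian →
      ∃ X ∈ Qhat, ∃ Y ∈ Qhat, H = X - Y) ∧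
    (∀ X ∈ dual, -X ∈ dual → X = 0) ∧
    (∀ H : Matrix (A × B) (A × B) ℂ, H.IsHermitian →
      ∃ X ∈ dual, ∃ Y ∈ dual, H = X - Y) := by
  have hQ : Qhat = (PointedCone.hull ℝ (statesOverTime A B) : Set _) := by
    rw [hQhat]; ext X
    exact (PointedCone.mem_hull_iff_exists_fin_sum (S := statesOverTime A B) (x := X)).symm
  subst hQ hdual
  have hspan : ∀ H : Matrix (A × B) (A × B) ℂ, H.IsHermitian →
      ∃ X ∈ PointedCone.hull ℝ (statesOverTime A B),
        ∃ Y ∈ PointedCone.hull ℝ (statesOverTime A B), H = X - Y :=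
    fun H hH => PointedCone.exists_sub_of_mem_span hH.mem_span_statesOverTime
  have hnonneg_hull : ∀ X : Matrix (A × B) (A × B) ℂ,
      (∀ Q ∈ statesOverTime A B, 0 ≤ (X * Q).trace.re) →
        ∀ Q ∈ PointedCone.hull ℝ (statesOverTime A B), 0 ≤ (X * Q).trace.re :=
    fun X hX Q hQ => PointedCone.nonneg_of_mem_hull (reTraceMul X) hX hQ
  refine ⟨fun X hX hnX => PointedCone.eq_zero_of_mem_hull_of_neg_mem (reTraceMul 1)
    (fun Q hQ => by simp [trace_of_mem_statesOverTime hQ]) hX hnX, hspan, ?_, ?_⟩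
  · rintro X ⟨hX, hXQ⟩ ⟨-, hnXQ⟩
    refine hX.eq_zero_of_forall_re_trace_mul_eq_zero hspan fun Q hQ => ?_
    have := hnXQ Q hQ
    rw [neg_mul, trace_neg, Complex.neg_re] at this
    linarith [hXQ Q hQ]
  · intro H hH
    obtain ⟨C, hC, hbound⟩ := exists_forall_abs_re_trace_mul_le H
    have hC1 : ((C : ℂ) • (1 : Matrix (A × B) (A × B) ℂ)).IsHermitian :=
      isHermitian_one.smul (by simp [IsSelfAdjoint])
    refine ⟨H + (C : ℂ) • 1, ⟨hH.add hC1, hnonneg_hull _ fun Q hQ => ?_⟩,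
      (C : ℂ) • 1, ⟨hC1, hnonneg_hull _ fun Q hQ => ?_⟩, (add_sub_cancel_right _ _).symm⟩
    · rw [re_trace_add_smul_one_mul_of_mem_statesOverTime H C hQ]
      linarith [abs_le.mp (hbound Q hQ)]
    · simpa [trace_of_mem_statesOverTime hQ] using hC
end

section
/- Let A and B be nonempty finite types and let K be any set of Hermitian complex matrices indexed by A × B. Consider dual cones with respect to the real inner products ⟪X, Y⟫ = Re Tr(X·Y) on Hermitian matrices indexed by A × B and, respectively, on Hermitian matrices indexed by A. Then the dual cone of the image Tr_B(K) = { Tr_B(M) : M ∈ K } is contained in the image under Tr_B of the dual cone of K: (Tr_B(K))* ⊆ Tr_B(K*). Moreover, for any Hermitian A-indexed matrix x, x ∈ (Tr_B(K))* if and only if x ⊗ₖ 1 ∈ K*. -/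
open Matrix
open scoped Kronecker ComplexOrder

lemma key' {A B : Type*} [Fintype A] [Fintype B] [DecidableEq B]
    (x : Matrix A A ℂ) (M : Matrix (A × B) (A × B) ℂ) :
    Matrix.trace ((x ⊗ₖ (1 : Matrix B B ℂ)) * M) = Matrix.trace (x * trB M) := by
  simp only [Matrix.trace, Matrix.diag, Matrix.mul_apply, trB, Matrix.kroneckerMap_apply,
    Matrix.of_apply, Fintype.sum_prod_type, Matrix.one_apply, mul_ite, mul_one, mul_zero,
    ite_mul, zero_mul, Finset.sum_ite_eq, Finset.mem_univ, if_true, Finset.mul_sum]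
  exact Finset.sum_congr rfl fun i _ => Finset.sum_comm

lemma herm_kron' {A B : Type*} [Fintype A] [Fintype B] [DecidableEq B]
    {x : Matrix A A ℂ} (hx : x.IsHermitian) : (x ⊗ₖ (1 : Matrix B B ℂ)).IsHermitian := by
  ext ⟨i, k⟩ ⟨j, l⟩
  simp only [Matrix.conjTranspose_apply, Matrix.kroneckerMap_apply, Matrix.one_apply]
  by_cases h : k = l
  · subst h; simp [← hx.apply j i, Matrix.conjTranspose_apply]
  · simp [h, Ne.symm h]

theorem stmt10 {A B : Type*} [Fintype A] [Fintype B] [Nonempty A] [Nonempty B]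
    [DecidableEq A] [DecidableEq B]
    (K : Set (Matrix (A × B) (A × B) ℂ)) (hK : ∀ M ∈ K, M.IsHermitian) :
    ({ x : Matrix A A ℂ | x.IsHermitian ∧ ∀ m ∈ trB '' K, 0 ≤ (Matrix.trace (x * m)).re } ⊆
      trB '' { X : Matrix (A × B) (A × B) ℂ |
        X.IsHermitian ∧ ∀ M ∈ K, 0 ≤ (Matrix.trace (X * M)).re }) ∧
    (∀ x : Matrix A A ℂ, x.IsHermitian →
      ((∀ m ∈ trB '' K, 0 ≤ (Matrix.trace (x * m)).re) ↔
        (x ⊗ₖ (1 : Matrix B B ℂ)) ∈ { X : Matrix (A × B) (A × B) ℂ |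
          X.IsHermitian ∧ ∀ M ∈ K, 0 ≤ (Matrix.trace (X * M)).re })) := by
  have hcard : (0 : ℝ) < (Fintype.card B : ℝ) := by
    exact_mod_cast Fintype.card_pos
  constructor
  · rintro x ⟨hx, hdual⟩
    refine ⟨((Fintype.card B : ℝ)⁻¹ : ℂ) • (x ⊗ₖ (1 : Matrix B B ℂ)), ⟨?_, ?_⟩, ?_⟩
    · rw [Matrix.IsHermitian, Matrix.conjTranspose_smul, (herm_kron' hx).eq]
      congr 1
      simp
    · intro M hM
      rw [Matrix.smul_mul, Matrix.trace_smul, smul_eq_mul, ← Complex.ofReal_inv,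
        Complex.re_ofReal_mul]
      exact mul_nonneg (inv_nonneg.2 hcard.le)
        (by rw [key']; exact hdual _ ⟨M, hM, rfl⟩)
    · ext i j
      simp only [trB, Matrix.of_apply, Matrix.smul_apply, Matrix.kroneckerMap_apply,
        Matrix.one_apply, smul_eq_mul, mul_ite, mul_one, mul_zero]
      simp only [if_pos rfl, Finset.sum_const, Finset.card_univ, nsmul_eq_mul, if_true]
      rw [← mul_assoc]
      have : ((Fintype.card B : ℂ)) * (((Fintype.card B : ℝ))⁻¹ : ℂ) = 1 := by
        push_cast
        exact mul_inv_cancel₀ (by exact_mod_cast hcard.ne')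
      rw [show ((Fintype.card B : ℕ) : ℂ) * (((Fintype.card B : ℝ))⁻¹ : ℂ) = 1 from this, one_mul]
  · intro x hx
    constructor
    · intro h
      exact ⟨herm_kron' hx, fun M hM => by rw [key']; exact h _ ⟨M, hM, rfl⟩⟩
    · rintro ⟨_, h⟩ m ⟨M, hM, rfl⟩
      rw [← key']
      exact h M hM
end
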